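/- arXiv:2506.08539 — 2 statements merged into one kernel-verified Lean document; each statement's English description precedes it below -/
import Mathlib

section
/- Let $\mathcal{A} = \{H_1,\dots,H_m\}$ be a collection of linear hyperplanes in $\mathbb{R}^n$ with $H_i = \ker\langle\alpha_i,\cdot\rangle$ for nonzero $\alpha_i$, and let $T = \bigcap_{i=1}^m H_i$. Let $U$ be a $k$-dimensional subspace with $\dim(U\cap T) = l$, and let $\beta_i$ be the orthogonal projection of $\alpha_i$ onto $U$. Then $U \cap (U^\perp + T^\perp) = \mathrm{span}\{\beta_1,\dots,\beta_m\}$, and this space has dimension $k - l$. -/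
/-!
Since `T` is the common kernel of the functionals `⟪α i, ·⟫`, its orthogonal complement is the
span of the `α i`. Decomposing a vector of `Uᗮ + Tᗮ` as `u' + t` with `u' ∈ Uᗮ`, it lies in `U`
exactly when it equals its projection `P_U t`; hence `U ∩ (Uᗮ + Tᗮ) = P_U(Tᗮ)`, which is spanned
by the `β i = P_U (α i)`. Moreover `Uᗮ + Tᗮ = (U ∩ T)ᗮ`, so this space is the orthogonal
complement of `U ∩ T` inside `U` and has dimension `k - l`.
-/

open RealInnerProductSpace

namespace Submodule

variable {𝕜 E : Type*} [RCLike 𝕜] [NormedAddCommGroup E] [InnerProductSpace 𝕜 E]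

theorem iInf_ker_innerSL_eq_orthogonal_span {ι : Type*} (v : ι → E) :
    ⨅ i, LinearMap.ker (innerSL 𝕜 (v i)).toLinearMap = (span 𝕜 (Set.range v))ᗮ := by
  rw [span_range_eq_iSup, ← iInf_orthogonal]
  congr! 1 with i
  ext x
  simp [mem_orthogonal_singleton_iff_inner_right]

theorem sup_orthogonal_eq_orthogonal_inf [FiniteDimensional 𝕜 E] (K₁ K₂ : Submodule 𝕜 E) :
    K₁ᗮ ⊔ K₂ᗮ = (K₁ ⊓ K₂)ᗮ := by
  rw [← orthogonal_orthogonal (K₁ᗮ ⊔ K₂ᗮ), ← inf_orthogonal, orthogonal_orthogonal,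
    orthogonal_orthogonal]

theorem inf_sup_orthogonal_eq_map_starProjection (U W : Submodule 𝕜 E)
    [U.HasOrthogonalProjection] :
    U ⊓ (Uᗮ ⊔ W) = W.map U.starProjection.toLinearMap := by
  apply le_antisymm
  · rintro _ ⟨hxU, hx⟩
    obtain ⟨u, hu, w, hw, rfl⟩ := mem_sup.1 hx
    refine ⟨w, hw, ?_⟩
    have hPu : U.starProjection u = 0 := (starProjection_apply_eq_zero_iff U).2 hu
    calc U.starProjection w = U.starProjection (u + w) := by rw [map_add, hPu, zero_add]
      _ = u + w := starProjection_eq_self_iff.2 hxU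
  · rintro _ ⟨w, hw, rfl⟩
    refine ⟨U.starProjection_apply_mem w, ?_⟩
    have hdecomp : U.starProjection w = -(w - U.starProjection w) + w := by abel
    change U.starProjection w ∈ Uᗮ ⊔ W
    rw [hdecomp]
    exact add_mem_sup (neg_mem (sub_starProjection_mem_orthogonal w)) hw

end Submodule

open Submodule in
theorem stmt5_general {n m k l : ℕ}
    (α : Fin m → EuclideanSpace ℝ (Fin n))
    (H : Fin m → Submodule ℝ (EuclideanSpace ℝ (Fin n)))
    (hH : ∀ i, H i = LinearMap.ker (innerSL ℝ (α i)).toLinearMap)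
    (T : Submodule ℝ (EuclideanSpace ℝ (Fin n))) (hT : T = ⨅ i, H i)
    (U : Submodule ℝ (EuclideanSpace ℝ (Fin n)))
    (hU : Module.finrank ℝ U = k) (hUT : Module.finrank ℝ ↥(U ⊓ T) = l)
    (β : Fin m → EuclideanSpace ℝ (Fin n))
    (hβ : ∀ i, β i = (U.orthogonalProjectionOnto (α i) : EuclideanSpace ℝ (Fin n))) :
    U ⊓ (Uᗮ ⊔ Tᗮ) = Submodule.span ℝ (Set.range β) ∧
    Module.finrank ℝ ↥(U ⊓ (Uᗮ ⊔ Tᗮ)) = k - l := by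
  have hTperp : Tᗮ = span ℝ (Set.range α) := by
    rw [hT, funext hH, iInf_ker_innerSL_eq_orthogonal_span, orthogonal_orthogonal]
  have hβ' : β = U.starProjection ∘ α := funext hβ
  refine ⟨?_, ?_⟩
  · rw [inf_sup_orthogonal_eq_map_starProjection, hTperp, map_span, hβ', Set.range_comp]
    rfl
  · have hdim := finrank_add_inf_finrank_orthogonal (inf_le_left : U ⊓ T ≤ U)
    rw [sup_orthogonal_eq_orthogonal_inf, inf_comm]
    omega

theorem stmt5 {n m k l : ℕ}
    (α : Fin m → EuclideanSpace ℝ (Fin n)) (hα : ∀ i, α i ≠ 0)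
    (H : Fin m → Submodule ℝ (EuclideanSpace ℝ (Fin n)))
    (hH : ∀ i, H i = LinearMap.ker (innerSL ℝ (α i)).toLinearMap)
    (T : Submodule ℝ (EuclideanSpace ℝ (Fin n))) (hT : T = ⨅ i, H i)
    (U : Submodule ℝ (EuclideanSpace ℝ (Fin n)))
    (hU : Module.finrank ℝ U = k) (hUT : Module.finrank ℝ ↥(U ⊓ T) = l)
    (β : Fin m → EuclideanSpace ℝ (Fin n))
    (hβ : ∀ i, β i = (U.orthogonalProjectionOnto (α i) : EuclideanSpace ℝ (Fin n))) :
    U ⊓ (Uᗮ ⊔ Tᗮ) = Submodule.span ℝ (Set.range β) ∧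
    Module.finrank ℝ ↥(U ⊓ (Uᗮ ⊔ Tᗮ)) = k - l :=
  stmt5_general α H hH T hT U hU hUT β hβ
end

section
/- Let $\mathcal{A} = \{H_1,\dots,H_m\}$ be linear hyperplanes in $\mathbb{R}^n$ with $H_i = \ker\langle\alpha_i,\cdot\rangle$, $T = \bigcap_i H_i$, $U$ a $k$-dimensional subspace with $\dim(U\cap T) = l$, and $\beta_i$ the orthogonal projection of $\alpha_i$ onto $U$. For $I\subseteq[m]$, the following are equivalent: (1) $|I| = k-l$ and $\{\beta_i \mid i\in I\}$ is linearly independent; (2) $|I| = k-l$ and $\big(U\cap(U^\perp+T^\perp)\big)\oplus\bigcap_{i\in I}H_i = \mathbb{R}^n$. -/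
open RealInnerProductSpace

/-! Put `W = U ⊓ (U ⊓ T)ᗮ = U ⊓ (Uᗮ ⊔ Tᗮ)`, of dimension `k - l`. Each `αᵢ` is orthogonal to `T`,
so its projection `βᵢ` lies in `W`, and `⟪βᵢ, x⟫ = ⟪αᵢ, x⟫` for `x ∈ U`. Hence `W ⊓ ⨅_{i ∈ I} Hᵢ` is
the orthogonal complement in `W` of the span of the `βᵢ`, which is trivial iff the `βᵢ` span `W`,
i.e. (as `|I| = dim W`) iff they are independent. Since `⨅_{i ∈ I} Hᵢ` has codimension at most `|I|`,
a trivial intersection already forces the sum to be everything. -/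

open Module Set Submodule

namespace Submodule

variable {𝕜 E ι : Type*} [RCLike 𝕜] [NormedAddCommGroup E] [InnerProductSpace 𝕜 E]

theorem ker_innerSL (v : E) : LinearMap.ker (innerSL 𝕜 v : E →ₗ[𝕜] 𝕜) = (𝕜 ∙ v)ᗮ := by
  ext x
  simp [mem_orthogonal_singleton_iff_inner_right]

theorem biInf_ker_innerSL (a : ι → E) (s : Set ι) :
    ⨅ i ∈ s, LinearMap.ker (innerSL 𝕜 (a i) : E →ₗ[𝕜] 𝕜) = (span 𝕜 (a '' s))ᗮ := by
  rw [iInf_subtype', image_eq_range, span_range_eq_iSup, ← iInf_orthogonal]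
  simp_rw [ker_innerSL]

theorem orthogonal_inf [FiniteDimensional 𝕜 E] (K L : Submodule 𝕜 E) :
    (K ⊓ L)ᗮ = Kᗮ ⊔ Lᗮ := by
  rw [← (Kᗮ ⊔ Lᗮ).orthogonal_orthogonal, ← inf_orthogonal, K.orthogonal_orthogonal,
    L.orthogonal_orthogonal]

theorem inf_orthogonal_map_starProjection {K W : Submodule 𝕜 E} [K.HasOrthogonalProjection]
    (hW : W ≤ K) (S : Submodule 𝕜 E) : W ⊓ (S.map (K.starProjection : E →ₗ[𝕜] E))ᗮ = W ⊓ Sᗮ := by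
  ext x
  simp only [mem_inf, and_congr_right_iff]
  intro hx
  have hPx : K.starProjection x = x := starProjection_eq_self_iff.mpr (hW hx)
  simp [mem_orthogonal, inner_starProjection_left_eq_right, hPx]

theorem starProjection_mem_inf_orthogonal_inf {K L : Submodule 𝕜 E} [K.HasOrthogonalProjection]
    {a : E} (ha : a ∈ Lᗮ) : K.starProjection a ∈ K ⊓ (K ⊓ L)ᗮ := by
  refine ⟨K.starProjection_apply_mem a, (mem_orthogonal _ _).mpr fun u hu => ?_⟩
  rw [← inner_starProjection_left_eq_right, starProjection_eq_self_iff.mpr hu.1]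
  exact (mem_orthogonal _ _).mp ha u hu.2

theorem linearIndependent_iff_inf_orthogonal_span_eq_bot [Fintype ι] {W : Submodule 𝕜 E}
    [FiniteDimensional 𝕜 W] {b : ι → E} (hb : ∀ i, b i ∈ W) (hcard : Fintype.card ι = finrank 𝕜 W) :
    LinearIndependent 𝕜 b ↔ W ⊓ (span 𝕜 (range b))ᗮ = ⊥ := by
  have := finrank_add_inf_finrank_orthogonal (span_le.mpr (range_subset_iff.mpr hb))
  rw [linearIndependent_iff_card_eq_finrank_span, inf_comm, ← finrank_eq_zero, Set.finrank]
  omega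

theorem linearIndependent_starProjection_iff_isCompl [FiniteDimensional 𝕜 E] [Fintype ι]
    (K L : Submodule 𝕜 E) {a : ι → E} (ha : ∀ i, a i ∈ Lᗮ)
    (hcard : Fintype.card ι = finrank 𝕜 K - finrank 𝕜 ↥(K ⊓ L)) :
    LinearIndependent 𝕜 (K.starProjection ∘ a) ↔ IsCompl (K ⊓ (K ⊓ L)ᗮ) (span 𝕜 (range a))ᗮ := by
  set S := span 𝕜 (range a)
  have hKrank := finrank_add_inf_finrank_orthogonal (inf_le_left : K ⊓ L ≤ K)
  rw [inf_comm (K ⊓ L)ᗮ K] at hKrank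
  have hSrank : finrank 𝕜 S + finrank 𝕜 Sᗮ = finrank 𝕜 E := finrank_add_finrank_orthogonal S
  have hSle : finrank 𝕜 S ≤ Fintype.card ι := finrank_range_le_card a
  rw [isCompl_iff_disjoint _ _ (by omega), disjoint_iff,
    linearIndependent_iff_inf_orthogonal_span_eq_bot (b := K.starProjection ∘ a)
      (fun i => starProjection_mem_inf_orthogonal_inf (ha i)) (by omega),
    range_comp, ← ContinuousLinearMap.coe_coe, span_image,
    inf_orthogonal_map_starProjection inf_le_left]

end Submodule

theorem stmt8_general {n m k l : ℕ}
    (α : Fin m → EuclideanSpace ℝ (Fin n))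
    (H : Fin m → Submodule ℝ (EuclideanSpace ℝ (Fin n)))
    (hH : ∀ i, H i = LinearMap.ker (innerSL ℝ (α i) : EuclideanSpace ℝ (Fin n) →ₗ[ℝ] ℝ))
    (T : Submodule ℝ (EuclideanSpace ℝ (Fin n))) (hT : T = ⨅ i, H i)
    (U : Submodule ℝ (EuclideanSpace ℝ (Fin n)))
    (hU : Module.finrank ℝ U = k) (hUT : Module.finrank ℝ ↥(U ⊓ T) = l)
    (β : Fin m → EuclideanSpace ℝ (Fin n))
    (hβ : ∀ i, β i = (U.orthogonalProjectionOnto (α i) : EuclideanSpace ℝ (Fin n)))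
    (I : Finset (Fin m)) :
    (I.card = k - l ∧ LinearIndependent ℝ (fun i : I => β i)) ↔
      (I.card = k - l ∧ (U ⊓ (Uᗮ ⊔ Tᗮ)) ⊓ (⨅ i ∈ I, H i) = ⊥ ∧
        (U ⊓ (Uᗮ ⊔ Tᗮ)) ⊔ (⨅ i ∈ I, H i) = ⊤) := by
  obtain rfl : β = U.starProjection ∘ α :=
    funext fun i => (hβ i).trans (U.starProjection_apply _).symm
  subst hU hUT
  have hQ : ⨅ i ∈ I, H i = (span ℝ (α '' I))ᗮ := by
    simp_rw [hH]
    exact biInf_ker_innerSL α I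
  have hαT : ∀ i, α i ∈ Tᗮ := fun i =>
    orthogonal_le (hT ▸ (iInf_le H i).trans ((hH i).trans (ker_innerSL (α i))).le)
      (le_orthogonal_orthogonal _ (mem_span_singleton_self _))
  rw [hQ, ← orthogonal_inf, ← disjoint_iff, ← codisjoint_iff, ← isCompl_iff, image_eq_range]
  exact and_congr_right fun hcard =>
    linearIndependent_starProjection_iff_isCompl U T (fun i => hαT i)
      (by rw [Fintype.card_coe, hcard])

theorem stmt8 {n m k l : ℕ}
    (α : Fin m → EuclideanSpace ℝ (Fin n)) (hα : ∀ i, α i ≠ 0)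
    (H : Fin m → Submodule ℝ (EuclideanSpace ℝ (Fin n)))
    (hH : ∀ i, H i = LinearMap.ker (innerSL ℝ (α i) : EuclideanSpace ℝ (Fin n) →ₗ[ℝ] ℝ))
    (T : Submodule ℝ (EuclideanSpace ℝ (Fin n))) (hT : T = ⨅ i, H i)
    (U : Submodule ℝ (EuclideanSpace ℝ (Fin n)))
    (hU : Module.finrank ℝ U = k) (hUT : Module.finrank ℝ ↥(U ⊓ T) = l)
    (β : Fin m → EuclideanSpace ℝ (Fin n))
    (hβ : ∀ i, β i = (U.orthogonalProjectionOnto (α i) : EuclideanSpace ℝ (Fin n)))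
    (I : Finset (Fin m)) :
    (I.card = k - l ∧ LinearIndependent ℝ (fun i : I => β i)) ↔
      (I.card = k - l ∧ (U ⊓ (Uᗮ ⊔ Tᗮ)) ⊓ (⨅ i ∈ I, H i) = ⊥ ∧
        (U ⊓ (Uᗮ ⊔ Tᗮ)) ⊔ (⨅ i ∈ I, H i) = ⊤) :=
  stmt8_general α H hH T hT U hU hUT β hβ I
end
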